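/- arXiv:2410.11344 — 2 statements merged into one kernel-verified Lean document; each statement's English description precedes it below -/
import Mathlib

section
/- For every integer k ≥ 0, the number of triples (a,b,c) ∈ ℕ³ with 2a+3b+4c = k equals the integer nearest to (k+3δ(k))²/48, where δ(k) = 1 if k is odd and δ(k) = 2 if k is even. (The quantity (k+3δ(k))²/48 is never a half-integer, so the nearest integer is well defined.) -/
open Complex Filter Finset Real

noncomputable section

/-- The lattice point `m + n·τ` associated with `p = (m, n) ∈ ℤ × ℤ`. -/
def latP (τ : ℂ) (p : ℤ × ℤ) : ℂ := (p.1 : ℂ) + (p.2 : ℂ) * τ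

/-- The lattice `ℤ + τℤ` in `ℂ`. -/
def lat (τ : ℂ) : Set ℂ := {w : ℂ | ∃ p : ℤ × ℤ, w = latP τ p}

/-- The Weierstrass ℘-function of the lattice `ℤ + τℤ`. -/
def wp (τ z : ℂ) : ℂ :=
  1 / z ^ 2 + ∑' p : ℤ × ℤ, if p ≠ 0 then 1 / (z - latP τ p) ^ 2 - 1 / latP τ p ^ 2 else 0

/-- The partial derivative `∂_z ℘`. -/
def wpz (τ z : ℂ) : ℂ := deriv (wp τ) z

/-- The Eisenstein series `e_k(τ) = Σ_{w ∈ Λ_τ ∖ {0}} w^{-k}`. -/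
def eis (k : ℕ) (τ : ℂ) : ℂ := ∑' p : ℤ × ℤ, if p ≠ 0 then 1 / latP τ p ^ k else 0

def e4 : ℂ → ℂ := eis 4
def e6 : ℂ → ℂ := eis 6

/-- The weight 2 Eisenstein series `e₂`. -/
def e2 (τ : ℂ) : ℂ :=
  (π : ℂ) ^ 2 / 3 *
    (1 - 24 * ∑' n : ℕ, (∑ d ∈ (n + 1).divisors, (d : ℂ)) * Complex.exp (2 * π * I * (n + 1) * τ))

/-- Inner (Eichler) sum in the definition of `E₁`. -/
def E1inner (τ z : ℂ) (m : ℤ) : ℂ :=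
  limUnder atTop fun N : ℕ =>
    ∑ n ∈ Finset.Icc (-(N : ℤ)) (N : ℤ),
      if (m, n) ≠ ((0 : ℤ), (0 : ℤ)) then 1 / (z + m + n * τ) else 0

/-- The first shifted Eisenstein function `E₁` (Eichler summation). -/
def E1 (τ z : ℂ) : ℂ :=
  limUnder atTop fun M : ℕ => ∑ m ∈ Finset.Icc (-(M : ℤ)) (M : ℤ), E1inner τ z m

/-- The Jacobi group `SL(2,ℤ) ⋉ ℤ²`. -/
abbrev JacobiGroup : Type := Matrix.SpecialLinearGroup (Fin 2) ℤ × ℤ × ℤ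

def ja (A : JacobiGroup) : ℂ := ((A.1 0 0 : ℤ) : ℂ)
def jb (A : JacobiGroup) : ℂ := ((A.1 0 1 : ℤ) : ℂ)
def jc (A : JacobiGroup) : ℂ := ((A.1 1 0 : ℤ) : ℂ)
def jd (A : JacobiGroup) : ℂ := ((A.1 1 1 : ℤ) : ℂ)
def jlam (A : JacobiGroup) : ℂ := (A.2.1 : ℂ)
def jmu (A : JacobiGroup) : ℂ := (A.2.2 : ℂ)

/-- Multiplication `(g,Λ)(g',Λ') = (gg', Λg' + Λ')` of the Jacobi group. -/
def jmul (A B : JacobiGroup) : JacobiGroup :=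
  (A.1 * B.1,
    (A.2.1 * B.1 0 0 + A.2.2 * B.1 1 0 + B.2.1,
     A.2.1 * B.1 0 1 + A.2.2 * B.1 1 1 + B.2.2))

/-- The weight `k`, index-zero action of the Jacobi group on functions `ℂ → ℂ → ℂ`. -/
def jslash (k : ℤ) (f : ℂ → ℂ → ℂ) (A : JacobiGroup) : ℂ → ℂ → ℂ := fun τ z =>
  (jc A * τ + jd A) ^ (-k) *
    f ((ja A * τ + jb A) / (jc A * τ + jd A))
      ((z + jlam A * τ + jmu A) / (jc A * τ + jd A))

def Jfun (A : JacobiGroup) : ℂ → ℂ → ℂ := fun τ _ => jc A * τ + jd A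

def Xfun (A : JacobiGroup) : ℂ → ℂ → ℂ := fun τ _ => jc A / (jc A * τ + jd A)

def Yfun (A : JacobiGroup) : ℂ → ℂ → ℂ := fun τ z =>
  (jc A * z + jc A * jmu A - jd A * jlam A) / (jc A * τ + jd A)

/-- A singular function on `ℋ × ℂ`. -/
def IsSingular (f : ℂ → ℂ → ℂ) : Prop :=
  ∃ p : ℕ,
    (∀ τ : ℂ, 0 < τ.im →
      (∀ z : ℂ, f τ (z + 1) = f τ z) ∧
      DifferentiableOn ℂ (f τ) (lat τ)ᶜ ∧
      ∀ w ∈ lat τ,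
        (p = 0 → AnalyticAt ℂ (f τ) w) ∧
        (0 < p → ∃ h : MeromorphicAt (f τ) w, meromorphicOrderAt (f τ) w = (-(p : ℤ) : WithTop ℤ))) ∧
    (∀ τ : ℂ, 0 < τ.im → ∀ z : ℂ, f (τ + 1) z = f τ z) ∧
    ∃ (L : ℕ → ℂ → ℂ) (cf : ℕ → ℕ → ℂ),
      (∀ τ : ℂ, 0 < τ.im → ∃ ε > 0, ∀ z : ℂ, z ≠ 0 → ‖z‖ < ε →
        f τ z = ∑' n : ℕ, L n τ * z ^ ((n : ℤ) - (p : ℤ))) ∧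
      (∀ n, DifferentiableOn ℂ (L n) {τ : ℂ | 0 < τ.im}) ∧
      (∀ n, ∀ τ : ℂ, 0 < τ.im → L n τ = ∑' r : ℕ, cf n r * Complex.exp (2 * π * I * (r : ℂ) * τ))

/-- A singular Jacobi form of index zero and weight `k`. -/
def IsSingularJacobiForm (k : ℤ) (f : ℂ → ℂ → ℂ) : Prop :=
  IsSingular f ∧
    ∀ A : JacobiGroup, ∀ τ z : ℂ, 0 < τ.im → z ∉ lat τ → jslash k f A τ z = f τ z

/-- The modular derivation `∂_τ = (π/(2i)) ∂/∂τ`. -/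
def dtau (f : ℂ → ℂ → ℂ) : ℂ → ℂ → ℂ := fun τ z =>
  (π : ℂ) / (2 * I) * deriv (fun t => f t z) τ

/-- The elliptic derivation `∂_z`. -/
def dz (f : ℂ → ℂ → ℂ) : ℂ → ℂ → ℂ := fun τ z => deriv (f τ) z

/-- The Oberdieck derivation on forms of weight `k`. -/
def Obstar (k : ℤ) (f : ℂ → ℂ → ℂ) : ℂ → ℂ → ℂ := fun τ z =>
  4 * dtau f τ z + E1 τ z * dz f τ z - (k : ℂ) * e2 τ * f τ z

/-- Solutions of `3b+4c = k`. -/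
def S2F (k : ℕ) : Finset (ℕ × ℕ) :=
  (Finset.range (k+1) ×ˢ Finset.range (k+1)).filter fun p => 3*p.1+4*p.2 = k

/-- Solutions of `2a+3b+4c = k`. -/
def S3F (k : ℕ) : Finset (ℕ × ℕ × ℕ) :=
  (Finset.range (k+1) ×ˢ Finset.range (k+1) ×ˢ Finset.range (k+1)).filter
    fun t => 2*t.1+3*t.2.1+4*t.2.2 = k

lemma mem_S2F {k : ℕ} {p : ℕ × ℕ} : p ∈ S2F k ↔ 3*p.1+4*p.2 = k := by
  simp only [S2F, Finset.mem_filter, Finset.mem_product, Finset.mem_range]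
  constructor
  · rintro ⟨_, h⟩; exact h
  · intro h; omega

lemma mem_S3F {k : ℕ} {t : ℕ × ℕ × ℕ} : t ∈ S3F k ↔ 2*t.1+3*t.2.1+4*t.2.2 = k := by
  simp only [S3F, Finset.mem_filter, Finset.mem_product, Finset.mem_range]
  constructor
  · rintro ⟨_, h⟩; exact h
  · intro h; omega

lemma u_rec (m : ℕ) :
    (S2F (m+3)).card = (S2F m).card + (if (m+3) % 4 = 0 then 1 else 0) := by
  classical
  have hsplit := Finset.card_filter_add_card_filter_not
    (s := S2F (m+3)) (p := fun p => p.1 = 0)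
  have h1 : ((S2F (m+3)).filter fun p => ¬ p.1 = 0).card = (S2F m).card := by
    apply Finset.card_nbij' (i := fun p => (p.1 - 1, p.2)) (j := fun p => (p.1 + 1, p.2))
    · intro p hp
      simp only [Finset.mem_coe, Finset.mem_filter, mem_S2F] at hp
      simp only [Finset.mem_coe, mem_S2F]
      omega
    · rintro ⟨a, b⟩ hp
      simp only [Finset.mem_coe, mem_S2F] at hp
      simp only [Finset.mem_coe, Finset.mem_filter, mem_S2F]
      omega
    · rintro ⟨a, b⟩ hp
      simp only [Finset.mem_coe, Finset.mem_filter, mem_S2F] at hp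
      simp only [Prod.mk.injEq, and_true]
      omega
    · rintro ⟨a, b⟩ _
      simp
  have h2 : ((S2F (m+3)).filter fun p => p.1 = 0).card
      = (if (m+3) % 4 = 0 then 1 else 0) := by
    split_ifs with h
    · rw [Finset.card_eq_one]
      refine ⟨(0, (m+3)/4), ?_⟩
      ext ⟨b, c⟩
      simp only [Finset.mem_filter, mem_S2F, Finset.mem_singleton, Prod.mk.injEq]
      omega
    · rw [Finset.card_eq_zero]
      ext ⟨b, c⟩
      simp only [Finset.mem_filter, mem_S2F, Finset.notMem_empty, iff_false, not_and]
      omega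
  omega

lemma t_rec (k : ℕ) : (S3F (k+2)).card = (S3F k).card + (S2F (k+2)).card := by
  classical
  have hsplit := Finset.card_filter_add_card_filter_not
    (s := S3F (k+2)) (p := fun t => t.1 = 0)
  have h1 : ((S3F (k+2)).filter fun t => ¬ t.1 = 0).card = (S3F k).card := by
    apply Finset.card_nbij' (i := fun t => (t.1 - 1, t.2)) (j := fun t => (t.1 + 1, t.2))
    · intro t ht
      simp only [Finset.mem_coe, Finset.mem_filter, mem_S3F] at ht
      simp only [Finset.mem_coe, mem_S3F]
      omega
    · rintro ⟨a, b, c⟩ ht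
      simp only [Finset.mem_coe, mem_S3F] at ht
      simp only [Finset.mem_coe, Finset.mem_filter, mem_S3F]
      omega
    · rintro ⟨a, b, c⟩ ht
      simp only [Finset.mem_coe, Finset.mem_filter, mem_S3F] at ht
      simp only [Prod.mk.injEq, and_true]
      omega
    · rintro ⟨a, b, c⟩ _
      simp
  have h2 : ((S3F (k+2)).filter fun t => t.1 = 0).card = (S2F (k+2)).card := by
    apply Finset.card_nbij' (i := fun t => t.2) (j := fun p => (0, p))
    · intro t ht
      simp only [Finset.mem_coe, Finset.mem_filter, mem_S3F] at ht
      simp only [Finset.mem_coe, mem_S2F]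
      omega
    · rintro ⟨b, c⟩ hp
      simp only [Finset.mem_coe, mem_S2F] at hp
      simp only [Finset.mem_coe, Finset.mem_filter, mem_S3F, and_true]
      omega
    · rintro ⟨a, b, c⟩ ht
      simp only [Finset.mem_coe, Finset.mem_filter, mem_S3F] at ht
      simp only [Prod.mk.injEq, and_true]
      omega
    · rintro ⟨b, c⟩ _
      simp
  omega

def Ufun (m : ℕ) : ℕ :=
  m / 12 + (if m % 12 = 1 ∨ m % 12 = 2 ∨ m % 12 = 5 then 0 else 1)

lemma u_eq (m : ℕ) : (S2F m).card = Ufun m := by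
  induction m using Nat.strong_induction_on with
  | _ m ih =>
    match m, ih with
    | 0, _ => decide
    | 1, _ => decide
    | 2, _ => decide
    | (n+3), ih =>
      rw [u_rec, ih n (by omega)]
      unfold Ufun
      split_ifs <;> omega

def aaF (r : ℕ) : ℕ := if r % 2 = 0 then (r+6)/2 else (r+3)/2

def bbF : ℕ → ℕ
  | 0 => 1 | 1 => 0 | 2 => 1 | 3 => 1 | 4 => 2 | 5 => 1
  | 6 => 3 | 7 => 2 | 8 => 4 | 9 => 3 | 10 => 5 | 11 => 4
  | _ => 0

def TfF (k : ℕ) : ℕ := 3*(k/12)*(k/12) + aaF (k%12) * (k/12) + bbF (k%12)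

lemma tf_poly (q r : ℕ) (h : r < 12) :
    TfF (12*q+r) = 3*q*q + aaF r * q + bbF r := by
  simp only [TfF]
  rw [show (12*q+r)/12 = q by omega, show (12*q+r)%12 = r by omega]

lemma u_poly (q r : ℕ) (h : r < 12) :
    Ufun (12*q+r) = q + (if r = 1 ∨ r = 2 ∨ r = 5 then 0 else 1) := by
  simp only [Ufun]
  rw [show (12*q+r)/12 = q by omega, show (12*q+r)%12 = r by omega]

lemma Tf_step (k : ℕ) : TfF (k+2) = TfF k + Ufun (k+2) := by
  obtain ⟨q, r, hr, rfl⟩ : ∃ q r, r < 12 ∧ k = 12*q+r :=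
    ⟨k/12, k%12, by omega, by omega⟩
  interval_cases r <;>
    [ (rw [show 12*q+0+2 = 12*q+2 by ring, tf_poly q 0 (by norm_num),
        tf_poly q 2 (by norm_num), u_poly q 2 (by norm_num)]);
      (rw [show 12*q+1+2 = 12*q+3 by ring, tf_poly q 1 (by norm_num),
        tf_poly q 3 (by norm_num), u_poly q 3 (by norm_num)]);
      (rw [show 12*q+2+2 = 12*q+4 by ring, tf_poly q 2 (by norm_num),
        tf_poly q 4 (by norm_num), u_poly q 4 (by norm_num)]);
      (rw [show 12*q+3+2 = 12*q+5 by ring, tf_poly q 3 (by norm_num),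
        tf_poly q 5 (by norm_num), u_poly q 5 (by norm_num)]);
      (rw [show 12*q+4+2 = 12*q+6 by ring, tf_poly q 4 (by norm_num),
        tf_poly q 6 (by norm_num), u_poly q 6 (by norm_num)]);
      (rw [show 12*q+5+2 = 12*q+7 by ring, tf_poly q 5 (by norm_num),
        tf_poly q 7 (by norm_num), u_poly q 7 (by norm_num)]);
      (rw [show 12*q+6+2 = 12*q+8 by ring, tf_poly q 6 (by norm_num),
        tf_poly q 8 (by norm_num), u_poly q 8 (by norm_num)]);
      (rw [show 12*q+7+2 = 12*q+9 by ring, tf_poly q 7 (by norm_num),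
        tf_poly q 9 (by norm_num), u_poly q 9 (by norm_num)]);
      (rw [show 12*q+8+2 = 12*q+10 by ring, tf_poly q 8 (by norm_num),
        tf_poly q 10 (by norm_num), u_poly q 10 (by norm_num)]);
      (rw [show 12*q+9+2 = 12*q+11 by ring, tf_poly q 9 (by norm_num),
        tf_poly q 11 (by norm_num), u_poly q 11 (by norm_num)]);
      (rw [show 12*q+10+2 = 12*(q+1)+0 by ring, tf_poly q 10 (by norm_num),
        tf_poly (q+1) 0 (by norm_num), u_poly (q+1) 0 (by norm_num)]);
      (rw [show 12*q+11+2 = 12*(q+1)+1 by ring, tf_poly q 11 (by norm_num),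
        tf_poly (q+1) 1 (by norm_num), u_poly (q+1) 1 (by norm_num)])] <;>
    simp only [aaF, bbF] <;> norm_num <;> ring

lemma t_eq (k : ℕ) : (S3F k).card = TfF k := by
  induction k using Nat.strong_induction_on with
  | _ k ih =>
    match k, ih with
    | 0, _ => decide
    | 1, _ => decide
    | (n+2), ih =>
      rw [t_rec, ih n (by omega), u_eq, Tf_step]

lemma div96 (t s : ℤ) (h0 : 0 ≤ s) (h1 : s < 96) : (96*t+s)/96 = t := by omega

/-- The number of triples `(a,b,c) ∈ ℕ³` with `2a+3b+4c = k` is the integer nearest to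
`(k+3δ(k))²/48`, where `δ(k) = 1` if `k` is odd and `δ(k) = 2` if `k` is even. -/
theorem card_solutions_eq_round (k : ℕ) :
    (Nat.card {t : ℕ × ℕ × ℕ // 2 * t.1 + 3 * t.2.1 + 4 * t.2.2 = k} : ℤ)
      = round ((((k : ℚ) + 3 * (if k % 2 = 1 then 1 else 2)) ^ 2) / 48) := by
  have hcard : Nat.card {t : ℕ × ℕ × ℕ // 2 * t.1 + 3 * t.2.1 + 4 * t.2.2 = k}
      = (S3F k).card := by
    rw [← Nat.card_eq_finsetCard]
    exact Nat.card_congr (Equiv.subtypeEquivRight fun t => mem_S3F.symm)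
  rw [hcard, t_eq]
  obtain ⟨q, r, hr, rfl⟩ : ∃ q r, r < 12 ∧ k = 12*q+r :=
    ⟨k/12, k%12, by omega, by omega⟩
  interval_cases r <;>
  · rw [tf_poly q _ (by norm_num)]
    first
      | rw [if_pos (by omega : (_ : ℕ) % 2 = 1)]
      | rw [if_neg (by omega : ¬ (_ : ℕ) % 2 = 1)]
    symm
    rw [round_eq, Int.floor_eq_iff]
    constructor <;>
    · simp only [aaF, bbF]
      push_cast
      nlinarith [sq_nonneg ((q : ℚ))]

end
end

section
/- Let k, s₁, s₂ ∈ ℕ and let f be a singular quasi-Jacobi form of index zero, weight k and depth at most (s₁,s₂), with singular coefficient functions f_{j₁,j₂} (0 ≤ j₁ ≤ s₁, 0 ≤ j₂ ≤ s₂) satisfying f|_k A = Σ_{j₁,j₂} f_{j₁,j₂}·X(A)^{j₁}·Y(A)^{j₂} for all A ∈ SL(2,ℤ)⋉ℤ². Then the top coefficient satisfies f_{s₁,s₂}|_{k−2s₁−s₂} B = f_{s₁,s₂} for every B ∈ SL(2,ℤ)⋉ℤ²; in particular, f_{s₁,s₂} is a singular Jacobi form of index zero and weight k−2s₁−s₂.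 -/
open Complex Filter Finset Real

noncomputable section

/-!
Fix `B`, write `τ' = Bτ`, `z' = Bz`, `J = cτ + d`, and let `A = ([[1,0],[n,1]], (l,0))` run over
the shears. Since `f|(AB) = J^{-k} (f|A)(τ', z')` and `X`, `Y` are cocycles,
`X(AB) = X(A)(τ', z') / J² + X(B)` and `Y(AB) = Y(A)(τ', z') / J + Y(B)`, the expansions of
`f|(AB)` and of `f|A` give a polynomial identity in `X(A)(τ', z') = n / (nτ' + 1)` and
`Y(A)(τ', z') = (nz' - l) / (nτ' + 1)`. These take infinitely many values (infinitely many for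
each `n`), so the top coefficients agree: `J^{-k} F_{s₁,s₂}(τ', z') = J^{-2s₁-s₂} F_{s₁,s₂}(τ, z)`.
-/

section Polynomial

open Polynomial

theorem coeff_top_eq_of_sum_linear_pow_eq {R ι : Type*} [CommRing R] [IsDomain R] [Infinite ι]
    {t : ι → R} (ht : Function.Injective t) (s : ℕ) (c d : ℕ → R) (a b : R)
    (h : ∀ i, ∑ j ∈ range (s + 1), c j * (a * t i + b) ^ j = ∑ j ∈ range (s + 1), d j * t i ^ j) :
    d s = c s * a ^ s := by
  set p : R[X] := ∑ j ∈ range (s + 1), C (c j) * (C a * X + C b) ^ j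
  set q : R[X] := ∑ j ∈ range (s + 1), C (d j) * X ^ j
  have hpq : p = q := by
    refine eq_of_infinite_eval_eq p q ((Set.infinite_range_of_injective ht).mono ?_)
    rintro _ ⟨i, rfl⟩
    simpa [p, q, eval_finsetSum] using h i
  have hlin : (C a * X + C b).natDegree ≤ 1 := natDegree_linear_le
  have hp : p.coeff s = c s * a ^ s := by
    rw [finsetSum_coeff, sum_eq_single_of_mem s (self_mem_range_succ s)]
    · have := coeff_pow_of_natDegree_le (m := s) hlin
      rw [mul_one] at this
      simp [coeff_C_mul, this]
    · intro j hj hjs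
      rw [coeff_C_mul, coeff_eq_zero_of_natDegree_lt, mul_zero]
      have := natDegree_pow_le_of_le j hlin
      have := mem_range.mp hj
      omega
  have hq : q.coeff s = d s := by
    simp [q, coeff_C_mul, coeff_X_pow]
  rw [← hp, ← hq, hpq]

theorem coeff_top_eq_of_sum_linear_pow_eq₂ {R ι κ : Type*} [CommRing R] [IsDomain R]
    [Infinite ι] [Infinite κ] {u : ι → R} (hu : Function.Injective u) {v : ι → κ → R}
    (hv : ∀ i, Function.Injective (v i)) (s₁ s₂ : ℕ) (c d : ℕ → ℕ → R) (a₁ b₁ a₂ b₂ : R)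
    (h : ∀ i l, ∑ j₁ ∈ range (s₁ + 1), ∑ j₂ ∈ range (s₂ + 1),
          c j₁ j₂ * (a₁ * u i + b₁) ^ j₁ * (a₂ * v i l + b₂) ^ j₂ =
        ∑ j₁ ∈ range (s₁ + 1), ∑ j₂ ∈ range (s₂ + 1), d j₁ j₂ * u i ^ j₁ * v i l ^ j₂) :
    d s₁ s₂ = c s₁ s₂ * a₁ ^ s₁ * a₂ ^ s₂ := by
  have inner : ∀ i, ∑ j₁ ∈ range (s₁ + 1), d j₁ s₂ * u i ^ j₁ =
      ∑ j₁ ∈ range (s₁ + 1), c j₁ s₂ * a₂ ^ s₂ * (a₁ * u i + b₁) ^ j₁ := by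
    intro i
    have := coeff_top_eq_of_sum_linear_pow_eq (hv i) s₂
      (fun j₂ => ∑ j₁ ∈ range (s₁ + 1), c j₁ j₂ * (a₁ * u i + b₁) ^ j₁)
      (fun j₂ => ∑ j₁ ∈ range (s₁ + 1), d j₁ j₂ * u i ^ j₁) a₂ b₂ fun l => by
        simp only [sum_mul]
        rw [sum_comm, sum_comm (s := range (s₂ + 1))]
        exact h i l
    simp only [this, sum_mul]
    exact sum_congr rfl fun _ _ => by ring
  rw [coeff_top_eq_of_sum_linear_pow_eq hu s₁ (fun j₁ => c j₁ s₂ * a₂ ^ s₂) (fun j₁ => d j₁ s₂)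
    a₁ b₁ fun i => (inner i).symm]
  ring

end Polynomial

section JacobiAction

def actTau (A : JacobiGroup) (τ : ℂ) : ℂ := (ja A * τ + jb A) / (jc A * τ + jd A)

def actZ (A : JacobiGroup) (τ z : ℂ) : ℂ := (z + jlam A * τ + jmu A) / (jc A * τ + jd A)

theorem jslash_apply (k : ℤ) (f : ℂ → ℂ → ℂ) (A : JacobiGroup) (τ z : ℂ) :
    jslash k f A τ z = Jfun A τ z ^ (-k) * f (actTau A τ) (actZ A τ z) := rfl

theorem ja_mul_jd_sub_jb_mul_jc (A : JacobiGroup) : ja A * jd A - jb A * jc A = 1 := by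
  have := A.1.2
  rw [Matrix.det_fin_two] at this
  simp only [ja, jb, jc, jd]
  exact_mod_cast this

theorem jc_mul_add_jd_ne_zero (A : JacobiGroup) {τ : ℂ} (hτ : 0 < τ.im) :
    jc A * τ + jd A ≠ 0 := by
  intro h
  have hc : jc A = 0 := by
    have him := congrArg Complex.im h
    simp only [jc, jd, add_im, mul_im, intCast_re, intCast_im, zero_mul, add_zero,
      zero_im, Int.cast_eq_zero, mul_eq_zero, hτ.ne', or_false] at him
    simp [jc, him]
  have hd : jd A = 0 := by simpa [hc] using h
  simpa [hc, hd] using ja_mul_jd_sub_jb_mul_jc A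

theorem im_actTau (A : JacobiGroup) (τ : ℂ) :
    (actTau A τ).im = τ.im / normSq (jc A * τ + jd A) := by
  have hdet := ja_mul_jd_sub_jb_mul_jc A
  simp only [actTau, div_im, ← sub_div]
  congr 1
  simp only [ja, jb, jc, jd] at hdet ⊢
  have hdet' : ((A.1 0 0 : ℤ) : ℝ) * (A.1 1 1 : ℤ) - ((A.1 0 1 : ℤ) : ℝ) * (A.1 1 0 : ℤ) = 1 := by
    exact_mod_cast hdet
  simp only [add_im, add_re, mul_im, mul_re, intCast_re, intCast_im]
  linear_combination τ.im * hdet'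

theorem im_actTau_pos (A : JacobiGroup) {τ : ℂ} (hτ : 0 < τ.im) : 0 < (actTau A τ).im := by
  rw [im_actTau]
  exact div_pos hτ (normSq_pos.mpr (jc_mul_add_jd_ne_zero A hτ))

theorem actZ_notMem_lat (A : JacobiGroup) {τ z : ℂ} (hτ : 0 < τ.im) (hz : z ∉ lat τ) :
    actZ A τ z ∉ lat (actTau A τ) := by
  rintro ⟨⟨p, q⟩, hpq⟩
  have hZ : actZ A τ z * (jc A * τ + jd A) = z + jlam A * τ + jmu A :=
    div_mul_cancel₀ _ (jc_mul_add_jd_ne_zero A hτ)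
  have hT : actTau A τ * (jc A * τ + jd A) = ja A * τ + jb A :=
    div_mul_cancel₀ _ (jc_mul_add_jd_ne_zero A hτ)
  rw [hpq, latP] at hZ
  refine hz ⟨(p * A.1 1 1 + q * A.1 0 1 - A.2.2, p * A.1 1 0 + q * A.1 0 0 - A.2.1), ?_⟩
  simp only [latP, jlam, jmu, ja, jb, jc, jd] at hZ hT ⊢
  push_cast
  linear_combination -hZ + q * hT

variable (A B : JacobiGroup)

@[simp] theorem ja_jmul : ja (jmul A B) = ja A * ja B + jb A * jc B := by
  simp [ja, jb, jc, jmul, Matrix.mul_apply, Fin.sum_univ_two]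

@[simp] theorem jb_jmul : jb (jmul A B) = ja A * jb B + jb A * jd B := by
  simp [ja, jb, jd, jmul, Matrix.mul_apply, Fin.sum_univ_two]

@[simp] theorem jc_jmul : jc (jmul A B) = jc A * ja B + jd A * jc B := by
  simp [ja, jc, jd, jmul, Matrix.mul_apply, Fin.sum_univ_two]

@[simp] theorem jd_jmul : jd (jmul A B) = jc A * jb B + jd A * jd B := by
  simp [jb, jc, jd, jmul, Matrix.mul_apply, Fin.sum_univ_two]

@[simp] theorem jlam_jmul : jlam (jmul A B) = jlam A * ja B + jmu A * jc B + jlam B := by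
  simp [ja, jc, jlam, jmu, jmul]

@[simp] theorem jmu_jmul : jmu (jmul A B) = jlam A * jb B + jmu A * jd B + jmu B := by
  simp [jb, jd, jlam, jmu, jmul]

variable {τ : ℂ} (hτ : 0 < τ.im) (z : ℂ)
include hτ

theorem Jfun_jmul : Jfun (jmul A B) τ z = Jfun A (actTau B τ) (actZ B τ z) * Jfun B τ z := by
  have hJ := jc_mul_add_jd_ne_zero B hτ
  simp only [Jfun, actTau] at hJ ⊢
  simp only [jc_jmul, jd_jmul]
  field_simp
  ring

theorem actTau_jmul : actTau (jmul A B) τ = actTau A (actTau B τ) := by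
  have hJ := jc_mul_add_jd_ne_zero B hτ
  have hJA := jc_mul_add_jd_ne_zero A (im_actTau_pos B hτ)
  simp only [actTau] at hJ hJA ⊢
  simp only [ja_jmul, jb_jmul, jc_jmul, jd_jmul]
  field_simp
  ring

theorem actZ_jmul : actZ (jmul A B) τ z = actZ A (actTau B τ) (actZ B τ z) := by
  have hJ := jc_mul_add_jd_ne_zero B hτ
  have hJA := jc_mul_add_jd_ne_zero A (im_actTau_pos B hτ)
  simp only [actTau, actZ] at hJ hJA ⊢
  simp only [jc_jmul, jd_jmul, jlam_jmul, jmu_jmul]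
  field_simp
  ring

theorem jslash_jmul (k : ℤ) (f : ℂ → ℂ → ℂ) :
    jslash k f (jmul A B) τ z =
      Jfun B τ z ^ (-k) * jslash k f A (actTau B τ) (actZ B τ z) := by
  rw [jslash_apply, jslash_apply, Jfun_jmul A B hτ, actTau_jmul A B hτ, actZ_jmul A B hτ, mul_zpow]
  ring

theorem Xfun_jmul : Xfun (jmul A B) τ z =
    Xfun A (actTau B τ) (actZ B τ z) / Jfun B τ z ^ 2 + Xfun B τ z := by
  have hJ : Jfun B τ z ≠ 0 := jc_mul_add_jd_ne_zero B hτ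
  have hJA : Jfun A (actTau B τ) (actZ B τ z) ≠ 0 := jc_mul_add_jd_ne_zero A (im_actTau_pos B hτ)
  have hT : actTau B τ * Jfun B τ z = ja B * τ + jb B := div_mul_cancel₀ _ hJ
  have hdet := ja_mul_jd_sub_jb_mul_jc B
  change jc (jmul A B) / Jfun (jmul A B) τ z = _
  rw [Jfun_jmul A B hτ]
  simp only [Xfun, Jfun, jc_jmul] at hJ hJA hT ⊢
  field_simp
  linear_combination jc A * hdet - jc A * jc B * hT

theorem Yfun_jmul : Yfun (jmul A B) τ z =
    Yfun A (actTau B τ) (actZ B τ z) / Jfun B τ z + Yfun B τ z := by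
  have hJ : Jfun B τ z ≠ 0 := jc_mul_add_jd_ne_zero B hτ
  have hJA : Jfun A (actTau B τ) (actZ B τ z) ≠ 0 := jc_mul_add_jd_ne_zero A (im_actTau_pos B hτ)
  have hT : actTau B τ * Jfun B τ z = ja B * τ + jb B := div_mul_cancel₀ _ hJ
  have hZ : actZ B τ z * Jfun B τ z = z + jlam B * τ + jmu B := div_mul_cancel₀ _ hJ
  have hdet := ja_mul_jd_sub_jb_mul_jc B
  change _ / Jfun (jmul A B) τ z = _
  rw [Jfun_jmul A B hτ]
  simp only [Yfun, Jfun, jc_jmul, jd_jmul, jlam_jmul, jmu_jmul] at hJ hJA hT hZ ⊢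
  field_simp
  -- `E` vanishes: times `Jfun B τ z` it is `(det B - 1) * (z + jmu B + jlam B * τ)` mod `hT`, `hZ`
  set E :=
    (ja B - actTau B τ * jc B) * (z + jmu B) + jlam B * (actTau B τ * jd B - jb B) - actZ B τ z
  linear_combination
    (jc A * jmu A - jd A * jlam A - jc A * E +
        jc A * (ja B - jc B * actTau B τ) * (z + jmu B + jlam B * τ)) * hdet +
      (jc A * jc B * E + jc A * (ja B - jc B * actTau B τ) * (jlam B * jd B - jc B * (z + jmu B))) *
        hT -
      jc A * (ja B - jc B * actTau B τ) * hZ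

end JacobiAction

section Shear

def shear (n l : ℤ) : JacobiGroup := (⟨!![1, 0; n, 1], by simp [Matrix.det_fin_two_of]⟩, (l, 0))

variable (n l : ℤ) (τ z : ℂ)

theorem Xfun_shear : Xfun (shear n l) τ z = n / (n * τ + 1) := by
  simp [Xfun, shear, jc, jd]

theorem Yfun_shear : Yfun (shear n l) τ z = (n * z - l) / (n * τ + 1) := by
  simp [Yfun, shear, jc, jd, jlam, jmu]

variable {τ} (hτ : 0 < τ.im)
include hτ

theorem intCast_mul_add_one_ne_zero : (n : ℂ) * τ + 1 ≠ 0 := by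
  simpa [shear, jc, jd] using jc_mul_add_jd_ne_zero (shear n 0) hτ

theorem injective_div_intCast_mul_add_one :
    Function.Injective fun n : ℤ => (n : ℂ) / (n * τ + 1) := by
  intro n m h
  simp only [div_eq_div_iff (intCast_mul_add_one_ne_zero n hτ)
    (intCast_mul_add_one_ne_zero m hτ)] at h
  exact_mod_cast (by linear_combination h : (n : ℂ) = m)

theorem injective_sub_div_intCast_mul_add_one :
    Function.Injective fun l : ℤ => ((n : ℂ) * z - l) / (n * τ + 1) := by
  intro l l' h
  have := (div_left_inj' (intCast_mul_add_one_ne_zero n hτ)).mp h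
  exact_mod_cast (by linear_combination -this : (l : ℂ) = l')

end Shear

def HasQuasiJacobiExpansion (k : ℤ) (s₁ s₂ : ℕ) (f : ℂ → ℂ → ℂ) (F : ℕ → ℕ → ℂ → ℂ → ℂ) :
    Prop :=
  ∀ A : JacobiGroup, ∀ τ z : ℂ, 0 < τ.im → z ∉ lat τ →
    jslash k f A τ z =
      ∑ j₁ ∈ range (s₁ + 1), ∑ j₂ ∈ range (s₂ + 1), F j₁ j₂ τ z * Xfun A τ z ^ j₁ * Yfun A τ z ^ j₂

section TopCoefficient

variable {k : ℤ} {s₁ s₂ : ℕ} {f : ℂ → ℂ → ℂ} {F : ℕ → ℕ → ℂ → ℂ → ℂ}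
  (hexp : HasQuasiJacobiExpansion k s₁ s₂ f F) (B : JacobiGroup) {τ z : ℂ} (hτ : 0 < τ.im)
  (hz : z ∉ lat τ)
include hexp hτ hz

theorem HasQuasiJacobiExpansion.top_coeff_transform :
    Jfun B τ z ^ (-k) * F s₁ s₂ (actTau B τ) (actZ B τ z) =
      F s₁ s₂ τ z * (Jfun B τ z ^ 2)⁻¹ ^ s₁ * (Jfun B τ z)⁻¹ ^ s₂ := by
  set τ' := actTau B τ
  set z' := actZ B τ z
  set J := Jfun B τ z
  have hτ' : 0 < τ'.im := im_actTau_pos B hτ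
  have hz' : z' ∉ lat τ' := actZ_notMem_lat B hτ hz
  refine coeff_top_eq_of_sum_linear_pow_eq₂ (injective_div_intCast_mul_add_one hτ')
    (fun n => injective_sub_div_intCast_mul_add_one n z' hτ') s₁ s₂
    (fun j₁ j₂ => F j₁ j₂ τ z) (fun j₁ j₂ => J ^ (-k) * F j₁ j₂ τ' z')
    (J ^ 2)⁻¹ (Xfun B τ z) J⁻¹ (Yfun B τ z) fun n l => ?_
  have hAB := hexp (jmul (shear n l) B) τ z hτ hz
  have hA := hexp (shear n l) τ' z' hτ' hz'
  rw [Xfun_jmul _ _ hτ, Yfun_jmul _ _ hτ, Xfun_shear, Yfun_shear] at hAB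
  rw [Xfun_shear, Yfun_shear] at hA
  simp only [← div_eq_inv_mul]
  rw [← hAB, jslash_jmul _ _ hτ, hA, mul_sum]
  refine sum_congr rfl fun j₁ _ => ?_
  rw [mul_sum]
  exact sum_congr rfl fun j₂ _ => by ring

theorem HasQuasiJacobiExpansion.jslash_top_coeff :
    jslash (k - 2 * s₁ - s₂) (F s₁ s₂) B τ z = F s₁ s₂ τ z := by
  have hJ : Jfun B τ z ≠ 0 := jc_mul_add_jd_ne_zero B hτ
  have hsplit : Jfun B τ z ^ (-(k - 2 * s₁ - s₂)) =
      Jfun B τ z ^ (2 * s₁ + s₂ : ℕ) * Jfun B τ z ^ (-k) := by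
    rw [← zpow_natCast, ← zpow_add₀ hJ]
    push_cast
    ring_nf
  rw [jslash_apply, hsplit, mul_assoc, hexp.top_coeff_transform B hτ hz, pow_add, pow_mul, inv_pow,
    inv_pow]
  field_simp

end TopCoefficient

theorem top_coefficient_is_singularJacobiForm_general (k s₁ s₂ : ℕ) (f : ℂ → ℂ → ℂ)
    (F : ℕ → ℕ → ℂ → ℂ → ℂ)
    (hFsing : ∀ j₁ j₂, j₁ ≤ s₁ → j₂ ≤ s₂ → IsSingular (F j₁ j₂))
    (hdec : ∀ A : JacobiGroup, ∀ τ z : ℂ, 0 < τ.im → z ∉ lat τ →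
      jslash (k : ℤ) f A τ z =
        ∑ j₁ ∈ Finset.range (s₁ + 1), ∑ j₂ ∈ Finset.range (s₂ + 1),
          F j₁ j₂ τ z * Xfun A τ z ^ j₁ * Yfun A τ z ^ j₂) :
    (∀ B : JacobiGroup, ∀ τ z : ℂ, 0 < τ.im → z ∉ lat τ →
      jslash ((k : ℤ) - 2 * s₁ - s₂) (F s₁ s₂) B τ z = F s₁ s₂ τ z) ∧
    IsSingularJacobiForm ((k : ℤ) - 2 * s₁ - s₂) (F s₁ s₂) := by
  have hinv : ∀ B : JacobiGroup, ∀ τ z : ℂ, 0 < τ.im → z ∉ lat τ →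
      jslash ((k : ℤ) - 2 * s₁ - s₂) (F s₁ s₂) B τ z = F s₁ s₂ τ z :=
    fun B _ _ hτ hz => HasQuasiJacobiExpansion.jslash_top_coeff hdec B hτ hz
  exact ⟨hinv, hFsing s₁ s₂ le_rfl le_rfl, hinv⟩

/-- The top coefficient of a singular quasi-Jacobi form of weight `k` and depth at most
`(s₁, s₂)` is a singular Jacobi form of weight `k - 2s₁ - s₂`. -/
theorem top_coefficient_is_singularJacobiForm (k s₁ s₂ : ℕ) (f : ℂ → ℂ → ℂ)
    (F : ℕ → ℕ → ℂ → ℂ → ℂ)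
    (hf : IsSingular f)
    (hFsing : ∀ j₁ j₂, j₁ ≤ s₁ → j₂ ≤ s₂ → IsSingular (F j₁ j₂))
    (hdec : ∀ A : JacobiGroup, ∀ τ z : ℂ, 0 < τ.im → z ∉ lat τ →
      jslash (k : ℤ) f A τ z =
        ∑ j₁ ∈ Finset.range (s₁ + 1), ∑ j₂ ∈ Finset.range (s₂ + 1),
          F j₁ j₂ τ z * Xfun A τ z ^ j₁ * Yfun A τ z ^ j₂) :
    (∀ B : JacobiGroup, ∀ τ z : ℂ, 0 < τ.im → z ∉ lat τ →
      jslash ((k : ℤ) - 2 * s₁ - s₂) (F s₁ s₂) B τ z = F s₁ s₂ τ z) ∧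
    IsSingularJacobiForm ((k : ℤ) - 2 * s₁ - s₂) (F s₁ s₂) :=
  top_coefficient_is_singularJacobiForm_general k s₁ s₂ f F hFsing hdec

end
end
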